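/- (Concentration inequality for the squared hinge loss.) Let F be a set of functions f : X → ℝ satisfying |f(x)| ≤ 1 for all x ∈ X. Then for every β > 0, every δ ∈ (0,1), and every f ∈ F, with probability at least 1 − δ over the i.i.d. sample D = {(x_i, y_i)}_{i=1}^m of size m drawn from ρ: E_D(f) − E_D(f_ρ) − (E(f) − E(f_ρ)) ≤ (17/18)·(E(f) − E(f_ρ)) + (1211/m)·log(1/δ) + (4β/9) + (1164/m)·exp(−βm/654)·𝔼[N₁(β/70, F, x_1^m)], where 𝔼[N₁(β/70, F, x_1^m)] denotes the expectation of the ℓ¹ empirical covering number over an i.i.d. draw of x_1, …, x_m from ρ_X. -/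

import Mathlib

open MeasureTheory
open scoped ENNReal NNReal

/-- The squared hinge loss `φ(t) = (max{0, 1 - t})²`. -/
noncomputable def sqHinge (t : ℝ) : ℝ := (max 0 (1 - t)) ^ 2

/-- Empirical risk of `f` on the sample `(x_i, y_i)_{i=1}^m` with the squared hinge loss. -/
noncomputable def empRisk {X : Type*} {m : ℕ} (x : Fin m → X) (y : Fin m → ℝ)
    (f : X → ℝ) : ℝ :=
  (1 / (m : ℝ)) * ∑ i, sqHinge (y i * f (x i))

/-- The expected squared hinge risk `E(f) = ∫ φ(y f(x)) dρ`. -/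
noncomputable def expRisk {X : Type*} [MeasurableSpace X] (ρ : Measure (X × ℝ))
    (f : X → ℝ) : ℝ :=
  ∫ z, sqHinge (z.2 * f z.1) ∂ρ

/-- The `ℓ¹` empirical covering number `N₁(ε, F, x₁^m)`. -/
noncomputable def covN {α : Type*} {m : ℕ} (ε : ℝ) (F : Set (α → ℝ)) (x : Fin m → α) : ℕ :=
  sInf {N : ℕ | ∃ c : Fin N → α → ℝ, ∀ f ∈ F, ∃ j : Fin N,
    (1 / (m : ℝ)) * ∑ i, |f (x i) - c j (x i)| ≤ ε}

/- ### Auxiliary lemmas -/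

lemma sqHinge_eq {t : ℝ} (ht : t ≤ 1) : sqHinge t = (1 - t) ^ 2 := by
  unfold sqHinge
  rw [max_eq_right (by linarith)]

lemma sqHinge_continuous : Continuous sqHinge :=
  (continuous_const.max (continuous_const.sub continuous_id)).pow 2

lemma exp_quad {u : ℝ} (hu : |u| ≤ 1) : Real.exp u ≤ 1 + u + (3 / 4) * u ^ 2 := by
  have h := Real.exp_bound hu (by norm_num : 0 < 2)
  have hs : ∑ i ∈ Finset.range 2, u ^ i / (Nat.factorial i : ℝ) = 1 + u := by
    simp [Finset.sum_range_succ]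
  rw [hs] at h
  have h1 := (abs_sub_le_iff.1 h).1
  have h2 : |u| ^ 2 = u ^ 2 := sq_abs u
  have h3 : ((Nat.succ 2 : ℕ) : ℝ) / ((Nat.factorial 2 : ℕ) * 2) = 3 / 4 := by norm_num
  nlinarith [sq_abs u]

lemma pi_integrable_prod {Z : Type*} [MeasurableSpace Z] {μ : Measure Z}
    [hμ : IsProbabilityMeasure μ] (m : ℕ) {F : Z → ℝ} (hF : Integrable F μ) :
    Integrable (fun D : Fin m → Z => ∏ i, F (D i)) (Measure.pi fun _ => μ) := by
  letI : MeasureSpace Z := ⟨μ⟩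
  haveI : IsProbabilityMeasure (volume : Measure Z) := hμ
  have h : (Measure.pi fun _ : Fin m => μ) = (volume : Measure (Fin m → Z)) := rfl
  rw [h]
  exact Integrable.fintype_prod (𝕜 := ℝ) (f := fun _ : Fin m => F) fun _ => hF

lemma pi_integral_prod {Z : Type*} [MeasurableSpace Z] {μ : Measure Z}
    [hμ : IsProbabilityMeasure μ] (m : ℕ) (F : Z → ℝ) :
    ∫ D : Fin m → Z, ∏ i, F (D i) ∂(Measure.pi fun _ => μ) = (∫ z, F z ∂μ) ^ m := by
  letI : MeasureSpace Z := ⟨μ⟩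
  haveI : IsProbabilityMeasure (volume : Measure Z) := hμ
  have h : (Measure.pi fun _ : Fin m => μ) = (volume : Measure (Fin m → Z)) := rfl
  rw [h]
  rw [← h, MeasureTheory.integral_fintype_prod_eq_pow (ι := Fin m) F, Fintype.card_fin]

/-- The key conditional-expectation identity: `∫ y·h(x) dρ = ∫ (2η-1)·h dρ_X`. -/
lemma key_integral {X : Type*} [MeasurableSpace X] (ρ : Measure (X × ℝ))
    [IsProbabilityMeasure ρ]
    (hsupp : ρ {z : X × ℝ | z.2 = 1 ∨ z.2 = -1} = 1)
    (η : X → ℝ) (hηm : Measurable η) (hη01 : ∀ x, 0 ≤ η x ∧ η x ≤ 1)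
    (hcond : ∀ s : Set X, MeasurableSet s →
      ρ (s ×ˢ ({1} : Set ℝ)) = ENNReal.ofReal (∫ x in s, η x ∂(ρ.map Prod.fst)))
    (h : X → ℝ) (hhm : Measurable h) (hhb : ∀ x, |h x| ≤ 2) :
    ∫ z, z.2 * h z.1 ∂ρ = ∫ x, (2 * η x - 1) * h x ∂(ρ.map Prod.fst) := by
  set μX := ρ.map Prod.fst with hμXdef
  haveI : IsProbabilityMeasure μX := Measure.isProbabilityMeasure_map measurable_fst.aemeasurable
  set A1 : Set (X × ℝ) := Prod.snd ⁻¹' ({1} : Set ℝ) with hA1def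
  set A2 : Set (X × ℝ) := Prod.snd ⁻¹' ({-1} : Set ℝ) with hA2def
  have hA1 : MeasurableSet A1 := measurable_snd (measurableSet_singleton _)
  have hA2 : MeasurableSet A2 := measurable_snd (measurableSet_singleton _)
  have hdisj : Disjoint A1 A2 := by
    rw [Set.disjoint_left]
    rintro z h1 h2
    have e1 : z.2 = 1 := h1
    have e2 : z.2 = -1 := h2
    rw [e1] at e2; norm_num at e2
  have hSeq : {z : X × ℝ | z.2 = 1 ∨ z.2 = -1} = A1 ∪ A2 := by
    ext z; simp [hA1def, hA2def]
  have hcompl : ρ (A1 ∪ A2)ᶜ = 0 := by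
    rw [← hSeq, measure_compl (by rw [hSeq]; exact hA1.union hA2) (measure_ne_top _ _),
      hsupp, measure_univ, tsub_self]
  have hmem : ∀ᵐ z ∂ρ, z ∈ A1 ∪ A2 := by
    rw [ae_iff]
    convert hcompl using 2
    rfl
  have hηint : Integrable η μX := by
    refine Integrable.mono' (integrable_const 1) hηm.aestronglyMeasurable ?_
    filter_upwards with x
    rw [Real.norm_eq_abs, abs_le]
    exact ⟨by linarith [(hη01 x).1], (hη01 x).2⟩
  -- the two conditional measures
  have hν1 : (ρ.restrict A1).map Prod.fst = μX.withDensity (fun x => ENNReal.ofReal (η x)) := by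
    ext s hs
    rw [Measure.map_apply measurable_fst hs, Measure.restrict_apply (measurable_fst hs)]
    have hset : Prod.fst ⁻¹' s ∩ A1 = s ×ˢ ({1} : Set ℝ) := by
      ext z
      simp only [Set.mem_inter_iff, Set.mem_preimage, Set.mem_singleton_iff, Set.mem_prod,
        hA1def]
    rw [hset, hcond s hs, withDensity_apply _ hs]
    exact ofReal_integral_eq_lintegral_ofReal hηint.integrableOn
      (ae_of_all _ fun x => (hη01 x).1)
  have hprodsum : ∀ s : Set X, MeasurableSet s →
      ρ (s ×ˢ ({1} : Set ℝ)) + ρ (s ×ˢ ({-1} : Set ℝ)) = μX s := by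
    intro s hs
    have hd : Disjoint (s ×ˢ ({1} : Set ℝ)) (s ×ˢ ({-1} : Set ℝ)) := by
      rw [Set.disjoint_left]
      rintro z ⟨_, h1⟩ ⟨_, h2⟩
      have e1 : z.2 = 1 := h1
      have e2 : z.2 = -1 := h2
      rw [e1] at e2; norm_num at e2
    rw [← measure_union hd (hs.prod (measurableSet_singleton _))]
    have hU : s ×ˢ ({1} : Set ℝ) ∪ s ×ˢ ({-1} : Set ℝ) = Prod.fst ⁻¹' s ∩ (A1 ∪ A2) := by
      ext z
      simp only [Set.mem_union, Set.mem_prod, Set.mem_singleton_iff, Set.mem_inter_iff,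
        Set.mem_preimage, hA1def, hA2def]
      tauto
    rw [hU]
    have h1 : ρ (Prod.fst ⁻¹' s ∩ (A1 ∪ A2)) = ρ (Prod.fst ⁻¹' s) := by
      refine le_antisymm (measure_mono Set.inter_subset_left) ?_
      calc ρ (Prod.fst ⁻¹' s) ≤ ρ ((Prod.fst ⁻¹' s ∩ (A1 ∪ A2)) ∪ (A1 ∪ A2)ᶜ) := by
            refine measure_mono fun z hz => ?_
            by_cases hzu : z ∈ A1 ∪ A2
            · exact Or.inl ⟨hz, hzu⟩
            · exact Or.inr hzu
        _ ≤ ρ (Prod.fst ⁻¹' s ∩ (A1 ∪ A2)) + ρ (A1 ∪ A2)ᶜ := measure_union_le _ _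
        _ = ρ (Prod.fst ⁻¹' s ∩ (A1 ∪ A2)) := by rw [hcompl, add_zero]
    rw [h1, hμXdef, Measure.map_apply measurable_fst hs]
  have hν2 : (ρ.restrict A2).map Prod.fst
      = μX.withDensity (fun x => ENNReal.ofReal (1 - η x)) := by
    ext s hs
    rw [Measure.map_apply measurable_fst hs, Measure.restrict_apply (measurable_fst hs)]
    have hset : Prod.fst ⁻¹' s ∩ A2 = s ×ˢ ({-1} : Set ℝ) := by
      ext z
      simp only [Set.mem_inter_iff, Set.mem_preimage, Set.mem_singleton_iff, Set.mem_prod,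
        hA2def]
    rw [hset, withDensity_apply _ hs]
    have hint1m : Integrable (fun x => 1 - η x) μX := (integrable_const 1).sub hηint
    rw [← ofReal_integral_eq_lintegral_ofReal hint1m.integrableOn
      (ae_of_all _ fun x => by simp only [Pi.zero_apply]; linarith [(hη01 x).2])]
    have hsum := hprodsum s hs
    have hsplit : ∫ x in s, (1 - η x) ∂μX = (μX s).toReal - ∫ x in s, η x ∂μX := by
      rw [integral_sub (integrable_const 1).integrableOn hηint.integrableOn]
      simp [Measure.restrict_apply_univ, Measure.real]
    rw [hsplit, ENNReal.ofReal_sub _ (setIntegral_nonneg hs fun x _ => (hη01 x).1),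
      ENNReal.ofReal_toReal (measure_ne_top _ _), ← hcond s hs]
    exact ENNReal.eq_sub_of_add_eq (measure_ne_top _ _) (by rw [add_comm]; exact hsum)
  -- splitting the integral
  have hintyh : Integrable (fun z : X × ℝ => z.2 * h z.1) ρ := by
    refine Integrable.mono' (integrable_const 2)
      (measurable_snd.mul (hhm.comp measurable_fst)).aestronglyMeasurable ?_
    filter_upwards [hmem] with z hz
    rw [Real.norm_eq_abs, abs_mul]
    have hyz : |z.2| = 1 := by
      rcases hz with h1 | h2
      · have e : z.2 = 1 := h1; rw [e]; norm_num
      · have e : z.2 = -1 := h2; rw [e]; norm_num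
    rw [hyz, one_mul]
    exact hhb _
  have hres : ρ.restrict (A1 ∪ A2) = ρ := Measure.restrict_eq_self_of_ae_mem hmem
  have hsplit : ∫ z, z.2 * h z.1 ∂ρ
      = (∫ z in A1, z.2 * h z.1 ∂ρ) + ∫ z in A2, z.2 * h z.1 ∂ρ := by
    conv_lhs => rw [← hres]
    exact setIntegral_union hdisj hA2 hintyh.integrableOn hintyh.integrableOn
  have hI1 : ∫ z in A1, z.2 * h z.1 ∂ρ = ∫ x, η x * h x ∂μX := by
    rw [setIntegral_congr_fun hA1 (g := fun z : X × ℝ => h z.1)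
      (fun z hz => by have e : z.2 = 1 := hz; simp [e])]
    have : ∫ z in A1, h z.1 ∂ρ = ∫ x, h x ∂((ρ.restrict A1).map Prod.fst) :=
      (integral_map measurable_fst.aemeasurable hhm.aestronglyMeasurable).symm
    rw [this, hν1]
    have hd : (fun x => ENNReal.ofReal (η x)) = (fun x => ((η x).toNNReal : ℝ≥0∞)) := rfl
    rw [hd, integral_withDensity_eq_integral_smul hηm.real_toNNReal]
    refine integral_congr_ae (ae_of_all _ fun x => ?_)
    show (η x).toNNReal • h x = η x * h x
    rw [NNReal.smul_def, Real.coe_toNNReal _ (hη01 x).1, smul_eq_mul]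
  have hI2 : ∫ z in A2, z.2 * h z.1 ∂ρ = ∫ x, -((1 - η x) * h x) ∂μX := by
    rw [setIntegral_congr_fun hA2 (g := fun z : X × ℝ => -h z.1)
      (fun z hz => by have e : z.2 = -1 := hz; simp [e])]
    have : ∫ z in A2, -h z.1 ∂ρ = ∫ x, -h x ∂((ρ.restrict A2).map Prod.fst) :=
      (integral_map measurable_fst.aemeasurable hhm.neg.aestronglyMeasurable).symm
    rw [this, hν2]
    have hd : (fun x => ENNReal.ofReal (1 - η x)) = (fun x => ((1 - η x).toNNReal : ℝ≥0∞)) := rfl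
    rw [hd, integral_withDensity_eq_integral_smul (f := fun x => (1 - η x).toNNReal)
      (measurable_const.sub hηm).real_toNNReal]
    refine integral_congr_ae (ae_of_all _ fun x => ?_)
    show (1 - η x).toNNReal • -h x = -((1 - η x) * h x)
    rw [NNReal.smul_def, Real.coe_toNNReal _ (by linarith [(hη01 x).2] : (0:ℝ) ≤ 1 - η x),
      smul_eq_mul]
    ring
  have hint1 : Integrable (fun x => η x * h x) μX := by
    refine Integrable.mono' (integrable_const 2) (hηm.mul hhm).aestronglyMeasurable ?_
    filter_upwards with x
    rw [Real.norm_eq_abs, abs_mul]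
    have h1 : |η x| ≤ 1 := by rw [abs_le]; exact ⟨by linarith [(hη01 x).1], (hη01 x).2⟩
    calc |η x| * |h x| ≤ 1 * 2 := by
          exact mul_le_mul h1 (hhb x) (abs_nonneg _) zero_le_one
      _ = 2 := by norm_num
  have hint2 : Integrable (fun x => -((1 - η x) * h x)) μX := by
    refine Integrable.mono' (integrable_const 2)
      ((measurable_const.sub hηm).mul hhm).neg.aestronglyMeasurable ?_
    filter_upwards with x
    rw [Real.norm_eq_abs, abs_neg, abs_mul]
    have h1 : |1 - η x| ≤ 1 := by rw [abs_le]; constructor <;> linarith [(hη01 x).1, (hη01 x).2]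
    calc |1 - η x| * |h x| ≤ 1 * 2 := by
          exact mul_le_mul h1 (hhb x) (abs_nonneg _) zero_le_one
      _ = 2 := by norm_num
  rw [hsplit, hI1, hI2, ← integral_add hint1 hint2]
  refine integral_congr_ae (ae_of_all _ fun x => ?_)
  ring

set_option maxHeartbeats 1600000 in
/-- **Concentration inequality for the squared hinge loss** (Theorem 3): for a class `F`
of functions bounded by `1`, every `β > 0`, `δ ∈ (0,1)` and `f ∈ F`, with probability at
least `1 - δ` over the i.i.d. sample `D` of size `m`,
`E_D(f) - E_D(f_ρ) - (E(f) - E(f_ρ)) ≤ (17/18)(E(f) - E(f_ρ)) + (1211/m)log(1/δ) + 4β/9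
  + (1164/m)exp(-βm/654) 𝔼[N₁(β/70, F, x₁^m)]`, where `f_ρ = 2η - 1`. -/
theorem statement2 {X : Type*} [MeasurableSpace X] (ρ : Measure (X × ℝ))
    [IsProbabilityMeasure ρ]
    (hsupp : ρ {z : X × ℝ | z.2 = 1 ∨ z.2 = -1} = 1)
    (η : X → ℝ) (hηm : Measurable η) (hη01 : ∀ x, 0 ≤ η x ∧ η x ≤ 1)
    (hcond : ∀ s : Set X, MeasurableSet s →
      ρ (s ×ˢ ({1} : Set ℝ)) = ENNReal.ofReal (∫ x in s, η x ∂(ρ.map Prod.fst)))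
    (m : ℕ) (hm : 1 ≤ m)
    (F : Set (X → ℝ)) (hFb : ∀ f ∈ F, ∀ x, |f x| ≤ 1) (hFm : ∀ f ∈ F, Measurable f)
    (β : ℝ) (hβ : 0 < β) (δ : ℝ) (hδ0 : 0 < δ) (hδ1 : δ < 1)
    (f : X → ℝ) (hf : f ∈ F) :
    ENNReal.ofReal (1 - δ) ≤
      (Measure.pi fun _ : Fin m => ρ)
        {D : Fin m → X × ℝ |
          empRisk (fun i => (D i).1) (fun i => (D i).2) f -
              empRisk (fun i => (D i).1) (fun i => (D i).2) (fun t => 2 * η t - 1) -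
              (expRisk ρ f - expRisk ρ (fun t => 2 * η t - 1)) ≤
            17 / 18 * (expRisk ρ f - expRisk ρ (fun t => 2 * η t - 1)) +
              1211 / (m : ℝ) * Real.log (1 / δ) + 4 * β / 9 +
              1164 / (m : ℝ) * Real.exp (-(β * m) / 654) *
                ∫ xs : Fin m → X, (covN (β / 70) F xs : ℝ)
                  ∂(Measure.pi fun _ : Fin m => ρ.map Prod.fst)} := by
  
  -- basic setup
  have hmpos : (0:ℝ) < m := Nat.cast_pos.2 (Nat.lt_of_lt_of_le Nat.zero_lt_one hm)
  set μX := ρ.map Prod.fst with hμXdef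
  haveI : IsProbabilityMeasure μX := Measure.isProbabilityMeasure_map measurable_fst.aemeasurable
  set fρ : X → ℝ := fun t => 2 * η t - 1 with hfρdef
  set g : X × ℝ → ℝ := fun z => sqHinge (z.2 * f z.1) - sqHinge (z.2 * fρ z.1) with hgdef
  have hfb : ∀ x, |f x| ≤ 1 := hFb f hf
  have hfρb : ∀ x, |fρ x| ≤ 1 := fun x => by
    show |2 * η x - 1| ≤ 1
    rw [abs_le]; constructor <;> linarith [(hη01 x).1, (hη01 x).2]
  have hfm : Measurable f := hFm f hf
  have hfρm : Measurable fρ := (hηm.const_mul 2).sub measurable_const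
  have hgm : Measurable g :=
    (sqHinge_continuous.measurable.comp (measurable_snd.mul (hfm.comp measurable_fst))).sub
      (sqHinge_continuous.measurable.comp (measurable_snd.mul (hfρm.comp measurable_fst)))
  -- the support sets
  set A1 : Set (X × ℝ) := Prod.snd ⁻¹' ({1} : Set ℝ) with hA1def
  set A2 : Set (X × ℝ) := Prod.snd ⁻¹' ({-1} : Set ℝ) with hA2def
  have hA1 : MeasurableSet A1 := measurable_snd (measurableSet_singleton _)
  have hA2 : MeasurableSet A2 := measurable_snd (measurableSet_singleton _)
  have hSeq : {z : X × ℝ | z.2 = 1 ∨ z.2 = -1} = A1 ∪ A2 := by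
    ext z; simp [hA1def, hA2def]
  have hcompl : ρ (A1 ∪ A2)ᶜ = 0 := by
    rw [← hSeq, measure_compl (by rw [hSeq]; exact hA1.union hA2) (measure_ne_top _ _),
      hsupp, measure_univ, tsub_self]
  have hmem : ∀ᵐ z ∂ρ, z ∈ A1 ∪ A2 := by
    rw [ae_iff]
    convert hcompl using 2
    rfl
  -- pointwise structure of g
  have hg_form : ∀ z, z ∈ A1 ∪ A2 → g z = (f z.1 - fρ z.1) * (f z.1 + fρ z.1 - 2 * z.2) := by
    rintro z (h1 | h2)
    · have e : z.2 = 1 := h1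
      show sqHinge (z.2 * f z.1) - sqHinge (z.2 * fρ z.1) = _
      rw [e, one_mul, one_mul, sqHinge_eq (le_of_abs_le (hfb _)),
        sqHinge_eq (le_of_abs_le (hfρb _))]
      ring
    · have e : z.2 = -1 := h2
      show sqHinge (z.2 * f z.1) - sqHinge (z.2 * fρ z.1) = _
      rw [e, neg_one_mul, neg_one_mul,
        sqHinge_eq (by linarith [(abs_le.1 (hfb z.1)).1] : -f z.1 ≤ 1),
        sqHinge_eq (by linarith [(abs_le.1 (hfρb z.1)).1] : -fρ z.1 ≤ 1)]
      ring
  have habs : ∀ z, z ∈ A1 ∪ A2 → |g z| ≤ 8 := by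
    intro z hz
    rw [hg_form z hz, abs_mul]
    have h1 : |f z.1 - fρ z.1| ≤ 2 := by
      rw [abs_le]
      constructor <;> linarith [(abs_le.1 (hfb z.1)).1, (abs_le.1 (hfb z.1)).2,
        (abs_le.1 (hfρb z.1)).1, (abs_le.1 (hfρb z.1)).2]
    have h2 : |f z.1 + fρ z.1 - 2 * z.2| ≤ 4 := by
      have hy : z.2 = 1 ∨ z.2 = -1 := by
        rcases hz with h | h
        · exact Or.inl h
        · exact Or.inr h
      rcases hy with e | e <;> rw [e] <;> rw [abs_le] <;>
        constructor <;> linarith [(abs_le.1 (hfb z.1)).1, (abs_le.1 (hfb z.1)).2,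
          (abs_le.1 (hfρb z.1)).1, (abs_le.1 (hfρb z.1)).2]
    calc |f z.1 - fρ z.1| * |f z.1 + fρ z.1 - 2 * z.2| ≤ 2 * 4 :=
          mul_le_mul h1 h2 (abs_nonneg _) (by norm_num)
      _ = 8 := by norm_num
  -- integrability facts over ρ
  have hint_g : Integrable g ρ :=
    Integrable.mono' (integrable_const 8) hgm.aestronglyMeasurable
      (hmem.mono fun z hz => by rw [Real.norm_eq_abs]; exact habs z hz)
  have hint_g2 : Integrable (fun z => g z ^ 2) ρ := by
    refine Integrable.mono' (integrable_const 64) (hgm.pow_const 2).aestronglyMeasurable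
      (hmem.mono fun z hz => ?_)
    rw [Real.norm_eq_abs]
    calc |g z ^ 2| = |g z| ^ 2 := by rw [abs_pow]
      _ ≤ 8 ^ 2 := pow_le_pow_left₀ (abs_nonneg _) (habs z hz) 2
      _ = 64 := by norm_num
  have hsqb : ∀ t : ℝ, |t| ≤ 1 → |sqHinge t| ≤ 4 := by
    intro t ht
    rw [sqHinge_eq (le_of_abs_le ht), abs_of_nonneg (sq_nonneg _)]
    nlinarith [(abs_le.1 ht).1, (abs_le.1 ht).2]
  have hymul : ∀ z : X × ℝ, z ∈ A1 ∪ A2 → ∀ k : X → ℝ, (∀ x, |k x| ≤ 1) → |z.2 * k z.1| ≤ 1 := by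
    intro z hz k hk
    have hy : |z.2| = 1 := by
      rcases hz with h | h
      · rw [(h : z.2 = 1)]; norm_num
      · rw [(h : z.2 = -1)]; norm_num
    rw [abs_mul, hy, one_mul]; exact hk _
  have hint_sq1 : Integrable (fun z : X × ℝ => sqHinge (z.2 * f z.1)) ρ := by
    refine Integrable.mono' (integrable_const 4)
      (sqHinge_continuous.measurable.comp
        (measurable_snd.mul (hfm.comp measurable_fst))).aestronglyMeasurable
      (hmem.mono fun z hz => ?_)
    rw [Real.norm_eq_abs]
    exact hsqb _ (hymul z hz f hfb)
  have hint_sq2 : Integrable (fun z : X × ℝ => sqHinge (z.2 * fρ z.1)) ρ := by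
    refine Integrable.mono' (integrable_const 4)
      (sqHinge_continuous.measurable.comp
        (measurable_snd.mul (hfρm.comp measurable_fst))).aestronglyMeasurable
      (hmem.mono fun z hz => ?_)
    rw [Real.norm_eq_abs]
    exact hsqb _ (hymul z hz fρ hfρb)
  have hgsplit : expRisk ρ f - expRisk ρ fρ = ∫ z, g z ∂ρ :=
    (integral_sub hint_sq1 hint_sq2).symm
  -- key identity
  have hh2 : ∀ x, |f x - fρ x| ≤ 2 := fun x => by
    rw [abs_le]
    constructor <;> linarith [(abs_le.1 (hfb x)).1, (abs_le.1 (hfb x)).2,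
      (abs_le.1 (hfρb x)).1, (abs_le.1 (hfρb x)).2]
  have hyh : ∫ z, z.2 * (f z.1 - fρ z.1) ∂ρ = ∫ x, (2 * η x - 1) * (f x - fρ x) ∂μX :=
    key_integral ρ hsupp η hηm hη01 hcond (fun x => f x - fρ x) (hfm.sub hfρm) hh2
  have hint_hsq : Integrable (fun x => (f x - fρ x) ^ 2) μX := by
    refine Integrable.mono' (integrable_const 4)
      ((hfm.sub hfρm).pow_const 2).aestronglyMeasurable (ae_of_all _ fun x => ?_)
    rw [Real.norm_eq_abs, abs_of_nonneg (sq_nonneg _)]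
    nlinarith [(abs_le.1 (hh2 x)).1, (abs_le.1 (hh2 x)).2]
  set v : ℝ := ∫ x, (f x - fρ x) ^ 2 ∂μX with hvdef
  have hv0 : 0 ≤ v := integral_nonneg fun x => sq_nonneg _
  have hv4 : v ≤ 4 := by
    rw [hvdef]
    calc ∫ x, (f x - fρ x) ^ 2 ∂μX ≤ ∫ _x, (4:ℝ) ∂μX :=
          integral_mono hint_hsq (integrable_const 4)
            (fun x => by nlinarith [(abs_le.1 (hh2 x)).1, (abs_le.1 (hh2 x)).2])
      _ = 4 := by simp
  have hEg : ∫ z, g z ∂ρ = v := by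
    have step1 : ∫ z, g z ∂ρ
        = ∫ z, ((f z.1 ^ 2 - fρ z.1 ^ 2) - 2 * (z.2 * (f z.1 - fρ z.1))) ∂ρ := by
      refine integral_congr_ae (hmem.mono fun z hz => ?_)
      rw [hg_form z hz]; ring
    have hint_q : Integrable (fun z : X × ℝ => f z.1 ^ 2 - fρ z.1 ^ 2) ρ := by
      refine Integrable.mono' (integrable_const 2)
        (((hfm.comp measurable_fst).pow_const 2).sub
          ((hfρm.comp measurable_fst).pow_const 2)).aestronglyMeasurable
        (ae_of_all _ fun z => ?_)
      rw [Real.norm_eq_abs, abs_le]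
      constructor <;> nlinarith [(abs_le.1 (hfb z.1)).1, (abs_le.1 (hfb z.1)).2,
        (abs_le.1 (hfρb z.1)).1, (abs_le.1 (hfρb z.1)).2]
    have hint_yh : Integrable (fun z : X × ℝ => z.2 * (f z.1 - fρ z.1)) ρ := by
      refine Integrable.mono' (integrable_const 2)
        (measurable_snd.mul ((hfm.sub hfρm).comp measurable_fst)).aestronglyMeasurable
        (hmem.mono fun z hz => ?_)
      rw [Real.norm_eq_abs]
      have hy : |z.2| = 1 := by
        rcases hz with h | h
        · rw [(h : z.2 = 1)]; norm_num
        · rw [(h : z.2 = -1)]; norm_num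
      rw [abs_mul, hy, one_mul]; exact hh2 _
    have e1 : ∫ z : X × ℝ, (f z.1 ^ 2 - fρ z.1 ^ 2) ∂ρ = ∫ x, (f x ^ 2 - fρ x ^ 2) ∂μX :=
      (integral_map measurable_fst.aemeasurable
        ((hfm.pow_const 2).sub (hfρm.pow_const 2)).aestronglyMeasurable).symm
    have hint_qX : Integrable (fun x => f x ^ 2 - fρ x ^ 2) μX := by
      refine Integrable.mono' (integrable_const 2)
        ((hfm.pow_const 2).sub (hfρm.pow_const 2)).aestronglyMeasurable
        (ae_of_all _ fun x => ?_)
      rw [Real.norm_eq_abs, abs_le]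
      constructor <;> nlinarith [(abs_le.1 (hfb x)).1, (abs_le.1 (hfb x)).2,
        (abs_le.1 (hfρb x)).1, (abs_le.1 (hfρb x)).2]
    have hint_cX : Integrable (fun x => (2 * η x - 1) * (f x - fρ x)) μX := by
      refine Integrable.mono' (integrable_const 2)
        (((hηm.const_mul 2).sub measurable_const).mul (hfm.sub hfρm)).aestronglyMeasurable
        (ae_of_all _ fun x => ?_)
      rw [Real.norm_eq_abs, abs_mul]
      have h1 : |2 * η x - 1| ≤ 1 := hfρb x
      calc |2 * η x - 1| * |f x - fρ x| ≤ 1 * 2 :=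
            mul_le_mul h1 (hh2 x) (abs_nonneg _) zero_le_one
        _ = 2 := by norm_num
    rw [step1, integral_sub hint_q (hint_yh.const_mul 2), integral_const_mul, e1, hyh,
      ← integral_const_mul, ← integral_sub hint_qX (hint_cX.const_mul 2), hvdef]
    refine integral_congr_ae (ae_of_all _ fun x => ?_)
    show f x ^ 2 - fρ x ^ 2 - 2 * ((2 * η x - 1) * (f x - fρ x)) = (f x - fρ x) ^ 2
    have e : fρ x = 2 * η x - 1 := rfl
    rw [← e]
    ring
  have hexpd : expRisk ρ f - expRisk ρ fρ = v := by rw [hgsplit, hEg]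
  have hempd : ∀ D : Fin m → X × ℝ,
      empRisk (fun i => (D i).1) (fun i => (D i).2) f -
      empRisk (fun i => (D i).1) (fun i => (D i).2) fρ
      = 1 / (m : ℝ) * ∑ i, g (D i) := by
    intro D
    unfold empRisk
    rw [← mul_sub, ← Finset.sum_sub_distrib]
  -- variance bound
  have e2 : ∫ z : X × ℝ, (f z.1 - fρ z.1) ^ 2 ∂ρ = ∫ x, (f x - fρ x) ^ 2 ∂μX :=
    (integral_map measurable_fst.aemeasurable
      ((hfm.sub hfρm).pow_const 2).aestronglyMeasurable).symm
  have hint_sqρ : Integrable (fun z : X × ℝ => (f z.1 - fρ z.1) ^ 2) ρ := by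
    refine Integrable.mono' (integrable_const 4)
      (((hfm.sub hfρm).comp measurable_fst).pow_const 2).aestronglyMeasurable
      (ae_of_all _ fun z => ?_)
    rw [Real.norm_eq_abs, abs_of_nonneg (sq_nonneg _)]
    nlinarith [(abs_le.1 (hh2 z.1)).1, (abs_le.1 (hh2 z.1)).2]
  have hg2v : ∫ z, g z ^ 2 ∂ρ ≤ 16 * v := by
    have hwle : ∀ᵐ z ∂ρ, g z ^ 2 ≤ 16 * (f z.1 - fρ z.1) ^ 2 := by
      refine hmem.mono fun z hz => ?_
      rw [hg_form z hz, mul_pow]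
      have h2 : (f z.1 + fρ z.1 - 2 * z.2) ^ 2 ≤ 16 := by
        have hy : z.2 = 1 ∨ z.2 = -1 := by
          rcases hz with h | h
          · exact Or.inl h
          · exact Or.inr h
        have h44 : (f z.1 + fρ z.1 - 2 * z.2) ^ 2 ≤ 4 ^ 2 := by
          rcases hy with e | e <;> rw [e] <;>
            refine sq_le_sq' (by linarith [(abs_le.1 (hfb z.1)).1, (abs_le.1 (hfρb z.1)).1])
              (by linarith [(abs_le.1 (hfb z.1)).2, (abs_le.1 (hfρb z.1)).2])
        linarith [h44]
      have hsq := sq_nonneg (f z.1 - fρ z.1)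
      nlinarith [hsq, h2]
    calc ∫ z, g z ^ 2 ∂ρ ≤ ∫ z, 16 * (f z.1 - fρ z.1) ^ 2 ∂ρ :=
          integral_mono_ae hint_g2 (hint_sqρ.const_mul 16) hwle
      _ = 16 * ∫ z : X × ℝ, (f z.1 - fρ z.1) ^ 2 ∂ρ := integral_const_mul _ _
      _ = 16 * v := by rw [e2, hvdef]
  have hint_gv2 : Integrable (fun z => (g z - v) ^ 2) ρ := by
    refine Integrable.mono' (integrable_const 144)
      ((hgm.sub measurable_const).pow_const 2).aestronglyMeasurable
      (hmem.mono fun z hz => ?_)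
    rw [Real.norm_eq_abs, abs_of_nonneg (sq_nonneg _)]
    nlinarith [(abs_le.1 (habs z hz)).1, (abs_le.1 (habs z hz)).2, hv0, hv4]
  have hX2 : ∫ z, (g z - v) ^ 2 ∂ρ ≤ 16 * v := by
    have hexpand : ∫ z, (g z - v) ^ 2 ∂ρ = ∫ z, g z ^ 2 ∂ρ - v ^ 2 := by
      have e : (fun z => (g z - v) ^ 2) = fun z => (g z ^ 2 - 2 * v * g z) + v ^ 2 :=
        funext fun z => by ring
      have hI2 : Integrable (fun z => 2 * v * g z) ρ := hint_g.const_mul (2 * v)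
      have hI1 : Integrable (fun z => g z ^ 2 - 2 * v * g z) ρ := hint_g2.sub hI2
      rw [e, integral_add hI1 (integrable_const (v ^ 2)),
        integral_sub hint_g2 hI2, integral_const_mul, hEg,
        integral_const]
      simp only [measure_univ, ENNReal.toReal_one, smul_eq_mul, one_mul, probReal_univ, mul_one]
      ring
    rw [hexpand]
    nlinarith [hg2v, sq_nonneg v]
  clear_value v g fρ
  -- mgf bound
  set E1 : ℝ := ∫ z, Real.exp (1 / 16 * (g z - v)) ∂ρ with hE1def
  clear_value E1
  have hmexp : Measurable fun z : X × ℝ => Real.exp (1 / 16 * (g z - v)) :=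
    Real.measurable_exp.comp ((hgm.sub measurable_const).const_mul (1 / 16))
  have habs1 : ∀ᵐ z ∂ρ, |1 / 16 * (g z - v)| ≤ 1 := by
    refine hmem.mono fun z hz => ?_
    have h1 := (abs_le.1 (habs z hz)).1
    have h2 := (abs_le.1 (habs z hz)).2
    rw [abs_le]
    constructor
    · linarith
    · linarith
  have hint_exp : Integrable (fun z => Real.exp (1 / 16 * (g z - v))) ρ := by
    refine Integrable.mono' (integrable_const (Real.exp 1)) hmexp.aestronglyMeasurable
      (habs1.mono fun z hz => ?_)
    rw [Real.norm_eq_abs, abs_of_pos (Real.exp_pos _)]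
    exact Real.exp_le_exp.2 (le_of_abs_le hz)
  have hint_gv : Integrable (fun z => g z - v) ρ := hint_g.sub (integrable_const v)
  have hint_gv16 : Integrable (fun z => 1 / 16 * (g z - v)) ρ := hint_gv.const_mul (1 / 16)
  have hint_lin : Integrable (fun z => 1 + 1 / 16 * (g z - v)) ρ :=
    (integrable_const 1).add hint_gv16
  have hE1le : E1 ≤ 1 + 3 / 64 * v := by
    have hmono : E1 ≤ ∫ z, (1 + 1 / 16 * (g z - v) + 3 / 1024 * (g z - v) ^ 2) ∂ρ := by
      rw [hE1def]
      refine integral_mono_ae hint_exp (hint_lin.add (hint_gv2.const_mul (3 / 1024)))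
        (habs1.mono fun z hz => ?_)
      have h := exp_quad hz
      have heq : 3 / 4 * (1 / 16 * (g z - v)) ^ 2 = 3 / 1024 * (g z - v) ^ 2 := by ring
      linarith
    have hcomp : ∫ z, (1 + 1 / 16 * (g z - v) + 3 / 1024 * (g z - v) ^ 2) ∂ρ
        = 1 + 1 / 16 * ((∫ z, g z ∂ρ) - v) + 3 / 1024 * ∫ z, (g z - v) ^ 2 ∂ρ := by
      have hI3 : Integrable (fun z => 3 / 1024 * (g z - v) ^ 2) ρ :=
        hint_gv2.const_mul (3 / 1024)
      rw [integral_add hint_lin hI3,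
        integral_add (integrable_const 1) hint_gv16,
        integral_const_mul, integral_const_mul,
        integral_sub hint_g (integrable_const v), integral_const, integral_const]
      simp only [measure_univ, ENNReal.toReal_one, smul_eq_mul, one_mul, probReal_univ, mul_one]
    rw [hcomp, hEg] at hmono
    have : 3 / 1024 * ∫ z, (g z - v) ^ 2 ∂ρ ≤ 3 / 1024 * (16 * v) := by linarith [hX2]
    linarith
  have hE1exp : E1 ≤ Real.exp (3 / 64 * v) :=
    le_trans hE1le (by linarith [Real.add_one_le_exp (3 / 64 * v)])
  have hE1nn : 0 ≤ E1 := by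
    rw [hE1def]; exact integral_nonneg fun z => (Real.exp_pos _).le
  -- product over the sample
  haveI : IsProbabilityMeasure (Measure.pi fun _ : Fin m => ρ) := inferInstance
  have hprod_int : Integrable
      (fun D : Fin m → X × ℝ => ∏ i, Real.exp (1 / 16 * (g (D i) - v)))
      (Measure.pi fun _ : Fin m => ρ) := pi_integrable_prod m hint_exp
  have hprod_eq : ∫ D : Fin m → X × ℝ, ∏ i, Real.exp (1 / 16 * (g (D i) - v))
      ∂(Measure.pi fun _ : Fin m => ρ) = E1 ^ m := by
    rw [hE1def]
    exact pi_integral_prod (μ := ρ) m fun z => Real.exp (1 / 16 * (g z - v))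
  set L : ℝ := Real.log (1 / δ) with hLdef
  clear_value L
  have hL : 0 < L := by
    rw [hLdef]
    apply Real.log_pos
    rw [lt_div_iff₀ hδ0]; linarith
  set t0 : ℝ := 17 / 18 * v + 1211 / (m : ℝ) * L with ht0def
  clear_value t0
  -- Markov / Chernoff step
  have hmark := mul_meas_ge_le_integral_of_nonneg
    (μ := Measure.pi fun _ : Fin m => ρ)
    (f := fun D : Fin m → X × ℝ => ∏ i, Real.exp (1 / 16 * (g (D i) - v)))
    (ae_of_all _ fun D => Finset.prod_nonneg fun i _ => (Real.exp_pos _).le)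
    hprod_int (Real.exp (1 / 16 * ((m : ℝ) * t0)))
  set Bad : Set (Fin m → X × ℝ) :=
    {D | Real.exp (1 / 16 * ((m : ℝ) * t0)) ≤ ∏ i, Real.exp (1 / 16 * (g (D i) - v))}
    with hBaddef
  clear_value Bad
  have hub : ((Measure.pi fun _ : Fin m => ρ) Bad).toReal ≤ δ := by
    have h1 : E1 ^ m ≤ Real.exp (3 / 64 * v) ^ m := pow_le_pow_left₀ hE1nn hE1exp m
    have h2 : Real.exp (3 / 64 * v) ^ m = Real.exp ((m : ℝ) * (3 / 64 * v)) :=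
      (Real.exp_nat_mul _ m).symm
    have hcancel : (m : ℝ) * (1211 / (m : ℝ) * L) = 1211 * L := by field_simp
    have h3 : Real.exp ((m : ℝ) * (3 / 64 * v)) ≤
        Real.exp (1 / 16 * ((m : ℝ) * t0) - L) := by
      rw [Real.exp_le_exp, ht0def]
      have hmv : 0 ≤ (m : ℝ) * v := mul_nonneg hmpos.le hv0
      have hexpand : (1:ℝ) / 16 * ((m : ℝ) * (17 / 18 * v + 1211 / (m : ℝ) * L))
          = 17 / 288 * ((m : ℝ) * v) + 1211 / 16 * L := by
        field_simp
        ring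
      have hmv38 : (m : ℝ) * (3 / 64 * v) = 3 / 64 * ((m : ℝ) * v) := by ring
      linarith [hexpand, hmv38, hmv, hL]
    have hchain : Real.exp (1 / 16 * ((m : ℝ) * t0)) *
        ((Measure.pi fun _ : Fin m => ρ) Bad).toReal ≤
        Real.exp (1 / 16 * ((m : ℝ) * t0)) * Real.exp (-L) := by
      calc Real.exp (1 / 16 * ((m : ℝ) * t0)) *
            ((Measure.pi fun _ : Fin m => ρ) Bad).toReal
          ≤ ∫ D : Fin m → X × ℝ, ∏ i, Real.exp (1 / 16 * (g (D i) - v))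
              ∂(Measure.pi fun _ : Fin m => ρ) := hmark
        _ = E1 ^ m := hprod_eq
        _ ≤ Real.exp (1 / 16 * ((m : ℝ) * t0) - L) := by
            rw [← h2] at h3; exact le_trans h1 h3
        _ = Real.exp (1 / 16 * ((m : ℝ) * t0)) * Real.exp (-L) := by
            rw [← Real.exp_add]; ring_nf
    have hd : ((Measure.pi fun _ : Fin m => ρ) Bad).toReal ≤ Real.exp (-L) :=
      le_of_mul_le_mul_left hchain (Real.exp_pos _)
    have he : Real.exp (-L) = δ := by
      rw [hLdef, one_div, Real.log_inv, neg_neg, Real.exp_log hδ0]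
    linarith
  have hBadle : (Measure.pi fun _ : Fin m => ρ) Bad ≤ ENNReal.ofReal δ := by
    rw [← ENNReal.ofReal_toReal (measure_ne_top (Measure.pi fun _ : Fin m => ρ) Bad)]
    exact ENNReal.ofReal_le_ofReal hub
  -- inclusion of the complement of the good event in Bad
  set Good : Set (Fin m → X × ℝ) :=
    {D : Fin m → X × ℝ |
      empRisk (fun i => (D i).1) (fun i => (D i).2) f -
          empRisk (fun i => (D i).1) (fun i => (D i).2) fρ -
          (expRisk ρ f - expRisk ρ fρ) ≤
        17 / 18 * (expRisk ρ f - expRisk ρ fρ) +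
          1211 / (m : ℝ) * L + 4 * β / 9 +
          1164 / (m : ℝ) * Real.exp (-(β * m) / 654) *
            ∫ xs : Fin m → X, (covN (β / 70) F xs : ℝ)
              ∂(Measure.pi fun _ : Fin m => μX)} with hGooddef
  clear_value Good
  have hsubset : Goodᶜ ⊆ Bad := by
    intro D hD
    rw [Set.mem_compl_iff, hGooddef, Set.mem_setOf_eq, not_le] at hD
    rw [hBaddef, Set.mem_setOf_eq]
    rw [← Real.exp_sum]
    apply Real.exp_le_exp.2
    have hsum : ∑ i : Fin m, 1 / 16 * (g (D i) - v)
        = 1 / 16 * ((∑ i, g (D i)) - (m : ℝ) * v) := by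
      rw [← Finset.mul_sum, Finset.sum_sub_distrib, Finset.sum_const, Finset.card_univ,
        Fintype.card_fin, nsmul_eq_mul]
    rw [hsum]
    have hC : 0 ≤ 1164 / (m : ℝ) * Real.exp (-(β * m) / 654) *
        ∫ xs : Fin m → X, (covN (β / 70) F xs : ℝ) ∂(Measure.pi fun _ : Fin m => μX) :=
      mul_nonneg (mul_nonneg (by positivity) (Real.exp_pos _).le)
        (integral_nonneg fun xs => Nat.cast_nonneg _)
    rw [hempd D, hexpd] at hD
    have h1 : t0 < 1 / (m : ℝ) * (∑ i, g (D i)) - v := by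
      rw [ht0def]
      linarith [hβ, hC]
    have h2 : (m : ℝ) * t0 < (m : ℝ) * (1 / (m : ℝ) * (∑ i, g (D i)) - v) :=
      mul_lt_mul_of_pos_left h1 hmpos
    have h3 : (m : ℝ) * (1 / (m : ℝ) * (∑ i, g (D i)) - v)
        = (∑ i, g (D i)) - (m : ℝ) * v := by
      field_simp
    linarith [h2, h3]
  -- conclusion
  have hGoodc : (Measure.pi fun _ : Fin m => ρ) Goodᶜ ≤ ENNReal.ofReal δ :=
    le_trans (measure_mono hsubset) hBadle
  have hofr : ENNReal.ofReal (1 - δ) = 1 - ENNReal.ofReal δ := by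
    rw [ENNReal.ofReal_sub _ hδ0.le, ENNReal.ofReal_one]
  rw [hofr, tsub_le_iff_right]
  calc (1 : ℝ≥0∞) = (Measure.pi fun _ : Fin m => ρ) Set.univ := measure_univ.symm
    _ = (Measure.pi fun _ : Fin m => ρ) (Good ∪ Goodᶜ) := by rw [Set.union_compl_self]
    _ ≤ (Measure.pi fun _ : Fin m => ρ) Good + (Measure.pi fun _ : Fin m => ρ) Goodᶜ :=
        measure_union_le _ _
    _ ≤ (Measure.pi fun _ : Fin m => ρ) Good + ENNReal.ofReal δ :=
        add_le_add le_rfl hGoodc
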